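/- arXiv:1003.1337 — 11 statements merged into one kernel-verified Lean document; each statement's English description precedes it below -/
import Mathlib

section
/- Let f be an odd positive integer, t a positive divisor of f, and suppose 4t divides f − t. Then gcd(2^(f−t) − 1, 2^(2f) + 1) = 2^(2t) + 1. -/
/-- gcd of Mersenne-type numbers: `gcd (2^a - 1) (2^b - 1) = 2^(gcd a b) - 1`. -/
lemma gcd_two_pow_sub_one (a b : ℕ) :
    Nat.gcd (2 ^ a - 1) (2 ^ b - 1) = 2 ^ (Nat.gcd a b) - 1 := by
  suffices H : ∀ n a b : ℕ, a + b = n →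
      Nat.gcd (2 ^ a - 1) (2 ^ b - 1) = 2 ^ (Nat.gcd a b) - 1 from H (a + b) a b rfl
  intro n
  induction n using Nat.strong_induction_on with
  | _ n ih =>
  intro a b hn
  subst hn
  rcases Nat.eq_zero_or_pos a with ha | ha
  · subst ha; simp
  rcases Nat.eq_zero_or_pos b with hb | hb
  · subst hb; simp
  rcases le_or_gt a b with hab | hab
  · have hx : 1 ≤ 2 ^ (b - a) := Nat.one_le_two_pow
    have hy : 1 ≤ 2 ^ a := Nat.one_le_two_pow
    have hxy : 2 ^ b = 2 ^ (b - a) * 2 ^ a := by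
      rw [← pow_add]; congr 1; omega
    have hsub : 2 ^ (b - a) * (2 ^ a - 1) = 2 ^ (b - a) * 2 ^ a - 2 ^ (b - a) := by
      rw [Nat.mul_sub, mul_one]
    have hle : 2 ^ (b - a) ≤ 2 ^ (b - a) * 2 ^ a := Nat.le_mul_of_pos_right _ hy
    have h1 : 2 ^ b - 1 = (2 ^ (b - a) - 1) + 2 ^ (b - a) * (2 ^ a - 1) := by
      rw [hsub, hxy]; omega
    rw [h1, Nat.gcd_add_mul_right_right,
      ih (a + (b - a)) (by omega) a (b - a) rfl, Nat.gcd_sub_self_right hab]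
  · have hx : 1 ≤ 2 ^ (a - b) := Nat.one_le_two_pow
    have hy : 1 ≤ 2 ^ b := Nat.one_le_two_pow
    have hxy : 2 ^ a = 2 ^ (a - b) * 2 ^ b := by
      rw [← pow_add]; congr 1; omega
    have hsub : 2 ^ (a - b) * (2 ^ b - 1) = 2 ^ (a - b) * 2 ^ b - 2 ^ (a - b) := by
      rw [Nat.mul_sub, mul_one]
    have hle : 2 ^ (a - b) ≤ 2 ^ (a - b) * 2 ^ b := Nat.le_mul_of_pos_right _ hy
    have h1 : 2 ^ a - 1 = (2 ^ (a - b) - 1) + 2 ^ (a - b) * (2 ^ b - 1) := by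
      rw [hsub, hxy]; omega
    rw [h1, Nat.gcd_add_mul_right_left,
      ih ((a - b) + b) (by omega) (a - b) b rfl, Nat.gcd_sub_self_left hab.le]

/-- gcd distributes over coprime products. -/
lemma gcd_mul_of_coprime {k m n : ℕ} (h : Nat.Coprime m n) :
    Nat.gcd k (m * n) = Nat.gcd k m * Nat.gcd k n := by
  apply Nat.dvd_antisymm
  · have h1 : Nat.gcd k (m * n) ∣ Nat.gcd (Nat.gcd k (m * n)) m * Nat.gcd (Nat.gcd k (m * n)) n :=
      Nat.dvd_gcd_mul_gcd_iff_dvd_mul.mpr (Nat.gcd_dvd_right _ _)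
    exact h1.trans (Nat.mul_dvd_mul
      (Nat.gcd_dvd_gcd_of_dvd_left m (Nat.gcd_dvd_left _ _))
      (Nat.gcd_dvd_gcd_of_dvd_left n (Nat.gcd_dvd_left _ _)))
  · have hcop : Nat.Coprime (Nat.gcd k m) (Nat.gcd k n) :=
      Nat.Coprime.coprime_dvd_left (Nat.gcd_dvd_right _ _)
        (Nat.Coprime.coprime_dvd_right (Nat.gcd_dvd_right _ _) h)
    exact Nat.dvd_gcd
      (hcop.mul_dvd_of_dvd_of_dvd (Nat.gcd_dvd_left _ _) (Nat.gcd_dvd_left _ _))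
      (Nat.mul_dvd_mul (Nat.gcd_dvd_right _ _) (Nat.gcd_dvd_right _ _))

theorem gcd_pow_sub_one_double_add_one (f t : ℕ) (hf : Odd f) (hfpos : 0 < f)
    (htpos : 0 < t) (hdvd : t ∣ f) (h4t : 4 * t ∣ f - t) :
    Nat.gcd (2 ^ (f - t) - 1) (2 ^ (2 * f) + 1) = 2 ^ (2 * t) + 1 := by
  have htle : t ≤ f := Nat.le_of_dvd hfpos hdvd
  obtain ⟨m, hm⟩ := hdvd
  have hmodd : Odd m := by
    rcases Nat.even_or_odd m with he | ho
    · exfalso; exact (Nat.not_odd_iff_even.mpr (hm ▸ he.mul_left t)) hf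
    · exact ho
  have hft : f - t = t * (m - 1) := by rw [hm, Nat.mul_sub, mul_one]
  have hm4 : 4 ∣ m - 1 := by
    obtain ⟨c, hc⟩ := h4t
    have h2 : t * (m - 1) = t * (4 * c) := by
      calc t * (m - 1) = f - t := hft.symm
      _ = 4 * t * c := hc
      _ = t * (4 * c) := by ring
    exact ⟨c, Nat.eq_of_mul_eq_mul_left htpos h2⟩
  have hmpos : 1 ≤ m := by
    rcases Nat.eq_zero_or_pos m with h0 | h1
    · exfalso; rw [h0, mul_zero] at hm; omega
    · exact h1
  -- exponent gcd computations
  have hg2 : Nat.gcd (f - t) (2 * f) = 2 * t := by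
    have h2f : 2 * f = t * (2 * m) := by rw [hm]; ring
    rw [hft, h2f, Nat.gcd_mul_left]
    have : 2 * m = 2 + 2 * (m - 1) := by omega
    rw [this, Nat.gcd_add_mul_right_right, Nat.gcd_comm,
      Nat.gcd_eq_left (by omega : 2 ∣ m - 1)]
    ring
  have hg4 : Nat.gcd (f - t) (4 * f) = 4 * t := by
    have h4f : 4 * f = t * (4 * m) := by rw [hm]; ring
    rw [hft, h4f, Nat.gcd_mul_left]
    have : 4 * m = 4 + 4 * (m - 1) := by omega
    rw [this, Nat.gcd_add_mul_right_right, Nat.gcd_comm,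
      Nat.gcd_eq_left hm4]
    ring
  -- coprimality of 2^(2f)-1 and 2^(2f)+1
  have h2fpos : 0 < 2 * f := by omega
  have hM1 : 2 ≤ 2 ^ (2 * f) := by
    calc 2 = 2 ^ 1 := rfl
    _ ≤ 2 ^ (2 * f) := Nat.pow_le_pow_right (by norm_num) (by omega)
  have hModd : Odd (2 ^ (2 * f) - 1) := by
    have : Even (2 ^ (2 * f)) := (Nat.even_pow' (by omega)).mpr even_two
    rcases this with ⟨k, hk⟩
    exact ⟨k - 1, by omega⟩
  have hcop : Nat.Coprime (2 ^ (2 * f) - 1) (2 ^ (2 * f) + 1) := by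
    have hd1 := Nat.gcd_dvd_left (2 ^ (2 * f) - 1) (2 ^ (2 * f) + 1)
    have hd2 := Nat.gcd_dvd_right (2 ^ (2 * f) - 1) (2 ^ (2 * f) + 1)
    have hd : Nat.gcd (2 ^ (2 * f) - 1) (2 ^ (2 * f) + 1) ∣ 2 := by
      have := Nat.dvd_sub hd2 hd1
      have heq : 2 ^ (2 * f) + 1 - (2 ^ (2 * f) - 1) = 2 := by omega
      rwa [heq] at this
    have hodd : Odd (Nat.gcd (2 ^ (2 * f) - 1) (2 ^ (2 * f) + 1)) :=
      hModd.of_dvd_nat hd1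
    rcases (Nat.dvd_prime Nat.prime_two).mp hd with h | h
    · exact h
    · exfalso; rw [h] at hodd; exact (Nat.not_odd_iff_even.mpr even_two) hodd
  -- product identity
  have hprod : (2 ^ (2 * f) - 1) * (2 ^ (2 * f) + 1) = 2 ^ (4 * f) - 1 := by
    have h4 : 2 ^ (4 * f) = 2 ^ (2 * f) * 2 ^ (2 * f) := by
      rw [← pow_add]; congr 1; omega
    rw [h4, Nat.sub_mul, one_mul, Nat.mul_add, mul_one]
    omega
  -- main chain
  have key : Nat.gcd (2 ^ (f - t) - 1) (2 ^ (2 * f) - 1)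
      * Nat.gcd (2 ^ (f - t) - 1) (2 ^ (2 * f) + 1) = 2 ^ (4 * t) - 1 := by
    rw [← gcd_mul_of_coprime hcop, hprod, gcd_two_pow_sub_one, hg4]
  rw [gcd_two_pow_sub_one, hg2] at key
  have hfac : (2 ^ (2 * t) - 1) * (2 ^ (2 * t) + 1) = 2 ^ (4 * t) - 1 := by
    have h4 : 2 ^ (4 * t) = 2 ^ (2 * t) * 2 ^ (2 * t) := by
      rw [← pow_add]; congr 1; omega
    have h1 : 1 ≤ 2 ^ (2 * t) := Nat.one_le_two_pow
    rw [h4, Nat.sub_mul, one_mul, Nat.mul_add, mul_one]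
    omega
  have hpos : 0 < 2 ^ (2 * t) - 1 := by
    have : 2 ≤ 2 ^ (2 * t) := by
      calc 2 = 2 ^ 1 := rfl
      _ ≤ 2 ^ (2 * t) := Nat.pow_le_pow_right (by norm_num) (by omega)
    omega
  rw [← hfac] at key
  exact Nat.eq_of_mul_eq_mul_left hpos key
end

section
/- Let f be an odd positive integer, t a positive divisor of f, and suppose 4t divides f − t, say f − t = 4tm. Set n = (f−1)/2 so that 2^f = 2^(2n+1). Then 2^f + ε·2^(n+1) + 1 is congruent to 2^t + ε·(−1)^m·2^((t+1)/2) + 1 modulo 2^(2t) + 1, for each ε ∈ {1, −1}. -/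
theorem modeq_case_4tm (n f t m : ℕ) (hn : 1 ≤ n) (hf : f = 2 * n + 1)
    (htpos : 0 < t) (hdvd : t ∣ f) (hm : f - t = 4 * t * m)
    (ε : ℤ) (hε : ε = 1 ∨ ε = -1) :
    (2 ^ f + ε * 2 ^ (n + 1) + 1) ≡
      (2 ^ t + ε * (-1) ^ m * 2 ^ ((t + 1) / 2) + 1) [ZMOD (2 ^ (2 * t) + 1)] := by
  have hodd : Odd f := ⟨n, by omega⟩
  have ht : Odd t := by
    rcases Nat.even_or_odd t with h | h
    · exact absurd (hodd.of_dvd_nat hdvd) (by simpa using h)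
    · exact h
  obtain ⟨k, hk⟩ := ht
  have hs : (t + 1) / 2 = k + 1 := by omega
  have htf : t ≤ f := Nat.le_of_dvd (by omega) hdvd
  have hr1 : 4 * t * m = 2 * (2 * t * m) := by ring
  have hr2 : 2 * t * (m * 2) = 2 * (2 * t * m) := by ring
  have hf2 : f = t + 4 * t * m := by omega
  have hn1 : n + 1 = (k + 1) + 2 * t * m := by omega
  have h1 : (2 : ℤ) ^ (2 * t) ≡ -1 [ZMOD (2 ^ (2 * t) + 1)] :=
    (Int.modEq_iff_dvd.mpr ⟨-1, by ring⟩)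
  have e1 : (2 : ℤ) ^ f = 2 ^ t * ((2 ^ (2 * t)) ^ m) ^ 2 := by
    rw [← pow_mul, ← pow_mul, ← pow_add]
    congr 1
    omega
  have e2 : (2 : ℤ) ^ (n + 1) = 2 ^ (k + 1) * (2 ^ (2 * t)) ^ m := by
    rw [hn1, pow_add, pow_mul]
  have hA : (2 : ℤ) ^ f ≡ 2 ^ t [ZMOD (2 ^ (2 * t) + 1)] := by
    calc (2 : ℤ) ^ f = 2 ^ t * ((2 ^ (2 * t)) ^ m) ^ 2 := e1
      _ ≡ 2 ^ t * (((-1 : ℤ)) ^ m) ^ 2 [ZMOD (2 ^ (2 * t) + 1)] :=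
          (((h1.pow m).pow 2).mul_left _)
      _ = 2 ^ t := by rw [← pow_mul, mul_comm m 2, pow_mul]; norm_num
  have hB : ε * 2 ^ (n + 1) ≡ ε * (-1) ^ m * 2 ^ (k + 1) [ZMOD (2 ^ (2 * t) + 1)] := by
    calc ε * 2 ^ (n + 1) = ε * (2 ^ (k + 1) * (2 ^ (2 * t)) ^ m) := by rw [e2]
      _ ≡ ε * (2 ^ (k + 1) * ((-1 : ℤ)) ^ m) [ZMOD (2 ^ (2 * t) + 1)] :=
          (((h1.pow m).mul_left _).mul_left ε)
      _ = ε * (-1) ^ m * 2 ^ (k + 1) := by ring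
  rw [hs]
  exact (hA.add hB).add_right 1
end

section
/- Let f be an odd positive integer, t a positive divisor of f with f − t = 4tm for a nonnegative integer m, set n = (f−1)/2. Then for each ε ∈ {1, −1}, the integer 2^t + ε·(−1)^m·2^((t+1)/2) + 1 divides 2^f + ε·2^(n+1) + 1. -/
theorem dvd_case_4tm (n f t m : ℕ) (hn : 1 ≤ n) (hf : f = 2 * n + 1)
    (htpos : 0 < t) (hdvd : t ∣ f) (hm : f - t = 4 * t * m)
    (ε : ℤ) (hε : ε = 1 ∨ ε = -1) :
    (2 ^ t + ε * (-1) ^ m * 2 ^ ((t + 1) / 2) + 1 : ℤ) ∣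
      (2 ^ f + ε * 2 ^ (n + 1) + 1) := by
  -- t is odd
  have h2t : ¬ (2 ∣ t) := fun h => by
    have : (2 : ℕ) ∣ f := h.trans hdvd
    omega
  set k := (t + 1) / 2 with hkdef
  have hk : 2 * k = t + 1 := by omega
  have htf : t ≤ f := Nat.le_of_dvd (by omega) hdvd
  have hf4 : f = 4 * t * m + t := by omega
  have h42 : 4 * t * m = 2 * (2 * t * m) := by ring
  have hn1 : n + 1 = 2 * t * m + k := by omega
  set c : ℤ := ε * (-1) ^ m * 2 ^ k with hcdef
  set D : ℤ := 2 ^ t + c + 1 with hDdef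
  have hε2 : ε ^ 2 = 1 := by rcases hε with rfl | rfl <;> norm_num
  have hm2 : ((-1 : ℤ) ^ m) ^ 2 = 1 := by
    rw [← pow_mul, mul_comm, pow_mul]; norm_num
  have hc2 : c ^ 2 = 2 * 2 ^ t := by
    have h2k : ((2 : ℤ) ^ k) ^ 2 = 2 * 2 ^ t := by
      rw [← pow_mul, mul_comm k 2, hk, pow_succ, mul_comm]
    calc c ^ 2 = ε ^ 2 * ((-1 : ℤ) ^ m) ^ 2 * ((2 : ℤ) ^ k) ^ 2 := by ring
      _ = 2 * 2 ^ t := by rw [hε2, hm2, h2k]; ring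
  have hD1 : D ∣ (2 : ℤ) ^ (2 * t) + 1 := by
    refine ⟨2 ^ t - c + 1, ?_⟩
    rw [two_mul, pow_add]
    linear_combination hc2
  have h2tmod : (2 : ℤ) ^ (2 * t) ≡ -1 [ZMOD D] := by
    refine Int.ModEq.symm (Int.modEq_iff_dvd.mpr ?_)
    have : (2 : ℤ) ^ (2 * t) - -1 = 2 ^ (2 * t) + 1 := by ring
    rw [this]; exact hD1
  have h2tm : (2 : ℤ) ^ (2 * t * m) ≡ (-1) ^ m [ZMOD D] := by
    rw [pow_mul]
    exact h2tmod.pow m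
  have h4tm : (2 : ℤ) ^ (4 * t * m) ≡ 1 [ZMOD D] := by
    have h : (2 : ℤ) ^ (4 * t * m) = 2 ^ (2 * t * m) * 2 ^ (2 * t * m) := by
      rw [← pow_add]; ring_nf
    rw [h]
    calc (2 : ℤ) ^ (2 * t * m) * 2 ^ (2 * t * m)
        ≡ (-1) ^ m * (-1) ^ m [ZMOD D] := h2tm.mul h2tm
      _ = 1 := by rw [← pow_add, ← two_mul, mul_comm, pow_mul]; exact hm2
  have hNmod : (2 : ℤ) ^ f + ε * 2 ^ (n + 1) + 1 ≡ D [ZMOD D] := by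
    rw [hf4, hn1, pow_add, pow_add]
    have step : (2 : ℤ) ^ (4 * t * m) * 2 ^ t + ε * ((2 : ℤ) ^ (2 * t * m) * 2 ^ k) + 1
        ≡ 1 * 2 ^ t + ε * ((-1) ^ m * 2 ^ k) + 1 [ZMOD D] :=
      ((h4tm.mul_right _).add ((h2tm.mul_right _).mul_left _)).add_right 1
    calc (2 : ℤ) ^ (4 * t * m) * 2 ^ t + ε * ((2 : ℤ) ^ (2 * t * m) * 2 ^ k) + 1
        ≡ 1 * 2 ^ t + ε * ((-1) ^ m * 2 ^ k) + 1 [ZMOD D] := step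
      _ = D := by rw [hDdef, hcdef]; ring
  have hfinal : (2 : ℤ) ^ f + ε * 2 ^ (n + 1) + 1 ≡ 0 [ZMOD D] :=
    hNmod.trans ((Int.modEq_zero_iff_dvd).mpr dvd_rfl)
  exact (Int.modEq_zero_iff_dvd).mp hfinal
end

section
/- Let f be an odd positive integer, t a positive divisor of f with f − t = 4tm for a nonnegative integer m, and set n = (f−1)/2. Then for each ε ∈ {1, −1}, gcd(2^(f−t) − 1, 2^f + ε·2^(n+1) + 1) = 2^t + ε·(−1)^m·2^((t+1)/2) + 1. -/
/-!
Write `t = 2u + 1` and `n = u + 2tm`, and put `N = 2^(2t) + 1`. The Aurifeuillian identity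
`(2y² + 2δy + 1)(2y² - 2δy + 1) = 4y⁴ + 1` (for `δ² = 1`) factors `2^(2f) + 1` with
`y = 2^n` (one factor is `A = 2^f + ε 2^(n+1) + 1`) and `N` with `y = 2^u` (one factor is
`P = 2^t + ε(-1)^m 2^(u+1) + 1`). Since `2^(2t) ≡ -1 (mod N)`, we get `2^n ≡ (-1)^m 2^u`,
hence `A ≡ P (mod N)`, and also `N ∣ D = 2^(f-t) - 1`. Modulo `D` we have
`2^(2f) + 1 ≡ N`, so `gcd(D, A)` divides `N`, and therefore `P`. Conversely `P` divides both
`D` and `A`.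
-/

section Aurifeuillian

variable {R : Type*} [CommRing R] {δ : R}

theorem aurifeuillian_identity (hδ : δ ^ 2 = 1) (y : R) :
    (2 * y ^ 2 + 2 * δ * y + 1) * (2 * y ^ 2 - 2 * δ * y + 1) = 4 * y ^ 4 + 1 := by
  linear_combination (-4 * y ^ 2) * hδ

theorem aurifeuillian_dvd (hδ : δ ^ 2 = 1) (y : R) :
    2 * y ^ 2 + 2 * δ * y + 1 ∣ 4 * y ^ 4 + 1 :=
  ⟨_, (aurifeuillian_identity hδ y).symm⟩

theorem aurifeuillian_nonneg [LinearOrder R] [IsStrictOrderedRing R] (hδ : δ ^ 2 = 1) (y : R) :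
    0 ≤ 2 * y ^ 2 + 2 * δ * y + 1 := by
  nlinarith [sq_nonneg y, sq_nonneg (y + δ)]

end Aurifeuillian

theorem aurifeuillian_modEq {N Y y σ : ℤ} (ε : ℤ) (hσ : σ ^ 2 = 1)
    (hY : Y ≡ σ * y [ZMOD N]) :
    2 * Y ^ 2 + 2 * ε * Y + 1 ≡ 2 * y ^ 2 + 2 * (ε * σ) * y + 1 [ZMOD N] :=
  calc 2 * Y ^ 2 + 2 * ε * Y + 1
      ≡ 2 * (σ * y) ^ 2 + 2 * ε * (σ * y) + 1 [ZMOD N] := by gcongr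
    _ = 2 * y ^ 2 + 2 * (ε * σ) * y + 1 := by linear_combination 2 * y ^ 2 * hσ

theorem pow_add_mul_modEq_pow (x : ℤ) (a c k : ℕ) :
    x ^ (c + a * k) ≡ x ^ c [ZMOD x ^ a - 1] :=
  calc x ^ (c + a * k) = x ^ c * (x ^ a) ^ k := by rw [pow_add, pow_mul]
    _ ≡ x ^ c * 1 ^ k [ZMOD x ^ a - 1] := by gcongr; exact Int.modEq_sub _ _
    _ = x ^ c := by ring

theorem Int.gcd_eq_natAbs_of_modEq {D A P N : ℤ} (hPN : P ∣ N) (hND : N ∣ D)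
    (hAP : A ≡ P [ZMOD N]) (hgN : (Int.gcd D A : ℤ) ∣ N) : Int.gcd D A = P.natAbs := by
  have hgP : (Int.gcd D A : ℤ) ∣ P := (hAP.of_dvd hgN).dvd_iff.mp (Int.gcd_dvd_right D A)
  have hPA : P ∣ A := (hAP.of_dvd hPN).dvd_iff.mpr dvd_rfl
  have hPg : P ∣ (Int.gcd D A : ℤ) := Int.dvd_coe_gcd (hPN.trans hND) hPA
  simpa using Int.natAbs_eq_of_dvd_dvd hgP hPg

theorem gcd_eq_aurifeuillian_factor {D N Y y σ ε : ℤ} (hε : ε ^ 2 = 1) (hσ : σ ^ 2 = 1)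
    (hN : N = 4 * y ^ 4 + 1) (hND : N ∣ D) (hY : Y ≡ σ * y [ZMOD N])
    (hYD : 4 * Y ^ 4 + 1 ≡ N [ZMOD D]) :
    (Int.gcd D (2 * Y ^ 2 + 2 * ε * Y + 1) : ℤ) = 2 * y ^ 2 + 2 * (ε * σ) * y + 1 := by
  have hεσ : (ε * σ) ^ 2 = 1 := by rw [mul_pow, hε, hσ, one_mul]
  have hgN : (Int.gcd D (2 * Y ^ 2 + 2 * ε * Y + 1) : ℤ) ∣ N :=
    (hYD.of_dvd (Int.gcd_dvd_left _ _)).dvd_iff.mp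
      ((Int.gcd_dvd_right _ _).trans (aurifeuillian_dvd hε Y))
  rw [Int.gcd_eq_natAbs_of_modEq (hN ▸ aurifeuillian_dvd hεσ y) hND
    (aurifeuillian_modEq ε hσ hY) hgN, Int.natAbs_of_nonneg (aurifeuillian_nonneg hεσ y)]

theorem gcd_case_4tm_general (n f t m : ℕ) (hf : f = 2 * n + 1)
    (hdvd : t ∣ f) (hm : f - t = 4 * t * m)
    (ε : ℤ) (hε : ε = 1 ∨ ε = -1) :
    (Int.gcd (2 ^ (f - t) - 1) (2 ^ f + ε * 2 ^ (n + 1) + 1) : ℤ) =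
      2 ^ t + ε * (-1) ^ m * 2 ^ ((t + 1) / 2) + 1 := by
  have htf : t ≤ f := Nat.le_of_dvd (by omega) hdvd
  obtain ⟨u, hu⟩ : ∃ u, t = 2 * u + 1 := Odd.of_dvd_nat ⟨n, hf⟩ hdvd
  have hn : n = u + 2 * t * m := by rw [mul_assoc] at hm ⊢; omega
  have hA : (2 : ℤ) ^ f + ε * 2 ^ (n + 1) + 1 = 2 * (2 ^ n) ^ 2 + 2 * ε * 2 ^ n + 1 := by
    rw [hf]; ring
  have hP : (2 : ℤ) ^ t + ε * (-1) ^ m * 2 ^ ((t + 1) / 2) + 1 =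
      2 * (2 ^ u) ^ 2 + 2 * (ε * (-1) ^ m) * 2 ^ u + 1 := by
    rw [show (t + 1) / 2 = u + 1 by omega, hu]; ring
  have hσ : ((-1 : ℤ) ^ m) ^ 2 = 1 := by
    rw [← pow_mul, Even.neg_one_pow (even_two.mul_left m)]
  have hN : (2 : ℤ) ^ (2 * t) + 1 = 4 * (2 ^ u) ^ 4 + 1 := by rw [hu]; ring
  have hND : (2 : ℤ) ^ (2 * t) + 1 ∣ 2 ^ (4 * t * m) - 1 :=
    (Dvd.intro (2 ^ (2 * t) - 1) (by ring)).trans (pow_one_sub_dvd_pow_mul_sub_one 2 (4 * t) m)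
  have hY : (2 : ℤ) ^ n ≡ (-1) ^ m * 2 ^ u [ZMOD 2 ^ (2 * t) + 1] :=
    calc (2 : ℤ) ^ n = (2 ^ (2 * t)) ^ m * 2 ^ u := by rw [hn, ← pow_mul]; ring
      _ ≡ (-1) ^ m * 2 ^ u [ZMOD 2 ^ (2 * t) + 1] :=
        ((Int.modEq_iff_dvd.mpr ⟨-1, by ring⟩).pow m).mul_right _
  have hYD : 4 * ((2 : ℤ) ^ n) ^ 4 + 1 ≡ 2 ^ (2 * t) + 1 [ZMOD 2 ^ (4 * t * m) - 1] := by
    convert (pow_add_mul_modEq_pow 2 (4 * t * m) (2 * t) 2).add_right 1 using 2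
    rw [← pow_mul, hn, hu]; ring
  rw [hA, hP, hm]
  exact gcd_eq_aurifeuillian_factor (sq_eq_one_iff.mpr hε) hσ hN hND hY hYD

theorem gcd_case_4tm (n f t m : ℕ) (hn : 1 ≤ n) (hf : f = 2 * n + 1)
    (htpos : 0 < t) (hdvd : t ∣ f) (hm : f - t = 4 * t * m)
    (ε : ℤ) (hε : ε = 1 ∨ ε = -1) :
    (Int.gcd (2 ^ (f - t) - 1) (2 ^ f + ε * 2 ^ (n + 1) + 1) : ℤ) =
      2 ^ t + ε * (-1) ^ m * 2 ^ ((t + 1) / 2) + 1 :=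
  gcd_case_4tm_general n f t m hf hdvd hm ε hε
end

section
/- Let f be an odd positive integer, t a positive divisor of f with f − t = 4tm for a nonnegative integer m, and set n = (f−1)/2. Then for each ε ∈ {1, −1}, gcd(2^(f−t) + 1, 2^f + ε·2^(n+1) + 1) = 1. -/
/-!
By the Aurifeuillian factorisation `4x⁴ + 1 = (2x² + 2x + 1)(2x² - 2x + 1)` with `x = 2ⁿ`, the
number `2^f ± 2^(n+1) + 1` divides `2^(2f) + 1`. Modulo a common divisor `d`, with `k = f - t`,
we have `2^k ≡ -1`, so `2^(2k) ≡ 1` and `2^(2t) ≡ 2^(2f) ≡ -1`; hence `2^(4t) ≡ 1` and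
`2^k = (2^(4t))^m ≡ 1`. Thus `d ∣ 2`, and `d = 1` because `2^f ± 2^(n+1) + 1` is odd.
-/

theorem neg_one_eq_one_of_pow_eq_neg_one {M : Type*} [Monoid M] [HasDistribNeg M] {x : M}
    {k t m : ℕ} (hk : k = 4 * t * m) (hxk : x ^ k = -1) (hxkt : x ^ (2 * (k + t)) = -1) :
    (-1 : M) = 1 := by
  have h2k : x ^ (2 * k) = 1 := by rw [mul_comm, pow_mul, hxk, neg_one_sq]
  have h2t : x ^ (2 * t) = -1 := by rwa [mul_add, pow_add, h2k, one_mul] at hxkt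
  have h4t : x ^ (4 * t) = 1 := by
    rw [show 4 * t = 2 * t * 2 by ring, pow_mul, h2t, neg_one_sq]
  rw [← hxk, hk, pow_mul, h4t, one_pow]

theorem two_pow_aurifeuillian_mul {ε : ℤ} (hε : ε ^ 2 = 1) (n : ℕ) :
    (2 ^ (2 * n + 1) + ε * 2 ^ (n + 1) + 1) * (2 ^ (2 * n + 1) - ε * 2 ^ (n + 1) + 1) =
      (2 : ℤ) ^ (2 * (2 * n + 1)) + 1 := by
  linear_combination (-(2 : ℤ) ^ (2 * n + 2)) * hε

theorem Int.gcd_two_pow_add_one_eq_one {k t m : ℕ} {b : ℤ} (hk : k = 4 * t * m)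
    (hb : b ∣ 2 ^ (2 * (k + t)) + 1) (hodd : Odd b) : Int.gcd (2 ^ k + 1) b = 1 := by
  set d := Int.gcd (2 ^ k + 1) b
  have hda : ((2 ^ k + 1 : ℤ) : ZMod d) = 0 :=
    (ZMod.intCast_zmod_eq_zero_iff_dvd _ _).2 (Int.gcd_dvd_left _ _)
  have hdb : ((2 ^ (2 * (k + t)) + 1 : ℤ) : ZMod d) = 0 :=
    (ZMod.intCast_zmod_eq_zero_iff_dvd _ _).2 ((Int.gcd_dvd_right _ _).trans hb)
  push_cast at hda hdb
  have h2 : ((2 : ℤ) : ZMod d) = 0 := by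
    have := neg_one_eq_one_of_pow_eq_neg_one hk (eq_neg_of_add_eq_zero_left hda)
      (eq_neg_of_add_eq_zero_left hdb)
    push_cast
    linear_combination -this
  have hd2 : (d : ℤ) ∣ 2 := (ZMod.intCast_zmod_eq_zero_iff_dvd _ _).1 h2
  have hunit := (Int.isCoprime_two_left.2 hodd).isUnit_of_dvd' hd2 (Int.gcd_dvd_right _ _)
  exact_mod_cast Int.isUnit_iff.1 hunit |>.resolve_right (by omega)

theorem gcd_add_one_case_4tm_general (n f t m : ℕ) (hf : f = 2 * n + 1)
    (hdvd : t ∣ f) (hm : f - t = 4 * t * m)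
    (ε : ℤ) (hε : ε = 1 ∨ ε = -1) :
    Int.gcd (2 ^ (f - t) + 1) (2 ^ f + ε * 2 ^ (n + 1) + 1) = 1 := by
  have htf : t ≤ f := Nat.le_of_dvd (by omega) hdvd
  have hε2 : ε ^ 2 = 1 := by rcases hε with rfl | rfl <;> norm_num
  apply Int.gcd_two_pow_add_one_eq_one hm
  · rw [Nat.sub_add_cancel htf, hf]
    exact Dvd.intro _ (two_pow_aurifeuillian_mul hε2 n)
  · have hpow {j : ℕ} (hj : j ≠ 0) : Even ((2 : ℤ) ^ j) := even_two.pow_of_ne_zero hj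
    exact ((hpow (by omega)).add ((hpow (by omega)).mul_left ε)).add_one

theorem gcd_add_one_case_4tm (n f t m : ℕ) (hn : 1 ≤ n) (hf : f = 2 * n + 1)
    (htpos : 0 < t) (hdvd : t ∣ f) (hm : f - t = 4 * t * m)
    (ε : ℤ) (hε : ε = 1 ∨ ε = -1) :
    Int.gcd (2 ^ (f - t) + 1) (2 ^ f + ε * 2 ^ (n + 1) + 1) = 1 :=
  gcd_add_one_case_4tm_general n f t m hf hdvd hm ε hε
end

section
/- Let f be an odd positive integer, t a positive divisor of f with f − t = 2t(2m+1) for a nonnegative integer m, and set n = (f−1)/2. Then for each ε ∈ {1, −1}, gcd(2^(f−t) − 1, 2^f + ε·2^(n+1) + 1) = 1. -/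
/-!
By Aurifeuille's factorization, `B = 2^f + ε·2^(n+1) + 1` divides `2^(2f) + 1`. A common
divisor `d` of `2^(f-t) - 1` and `B` therefore divides `2^(4f) - 1` as well, hence `2^gcd(f-t, 4f) - 1`.
Since `f - t = 2u` with `u` odd, `gcd(f-t, 4f)` divides `2f`, so `d` divides both `2^(2f) ∓ 1`,
hence `2`; and `d` is odd.
-/

theorem two_pow_add_mul_two_pow_add_one_dvd {R : Type*} [CommRing R] {ε : R} (hε : ε ^ 2 = 1)
    (n : ℕ) : (2 : R) ^ (2 * n + 1) + ε * 2 ^ (n + 1) + 1 ∣ 2 ^ (2 * (2 * n + 1)) + 1 :=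
  ⟨2 ^ (2 * n + 1) - ε * 2 ^ (n + 1) + 1, by linear_combination (2 : R) ^ (2 * n + 2) * hε⟩

theorem Nat.gcd_two_mul_two_mul_dvd {u : ℕ} (hu : Odd u) (b : ℕ) :
    Nat.gcd (2 * u) (2 * (2 * b)) ∣ 2 * b := by
  rw [Nat.gcd_mul_left, (Nat.coprime_two_left.mpr hu).gcd_mul_left_cancel_right]
  exact Nat.mul_dvd_mul_left 2 (Nat.gcd_dvd_right u b)

theorem Nat.dvd_two_of_dvd_pow_sub_one_of_dvd_pow_add_one {x a b d : ℕ} (hx : 0 < x)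
    (hab : Nat.gcd a (2 * b) ∣ b) (ha : d ∣ x ^ a - 1) (hb : d ∣ x ^ b + 1) : d ∣ 2 := by
  have hb2 : d ∣ x ^ (2 * b) - 1 := by
    rw [pow_mul', ← one_pow 2, Nat.sq_sub_sq]
    exact hb.mul_right _
  have hsub : d ∣ x ^ b - 1 := by
    have hgcd : d ∣ x ^ Nat.gcd a (2 * b) - 1 :=
      Nat.pow_sub_one_gcd_pow_sub_one x a (2 * b) ▸ Nat.dvd_gcd ha hb2
    refine hgcd.trans ?_
    rw [← Nat.gcd_eq_left hab, ← Nat.pow_sub_one_gcd_pow_sub_one]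
    exact Nat.gcd_dvd_right _ _
  have hpos : 1 ≤ x ^ b := Nat.one_le_pow _ _ hx
  have := Nat.dvd_sub hb hsub
  rwa [show x ^ b + 1 - (x ^ b - 1) = 2 by omega] at this

theorem gcd_sub_one_case_2t_general (n f t m : ℕ) (hf : f = 2 * n + 1)
    (hdvd : t ∣ f) (hm : f - t = 2 * t * (2 * m + 1))
    (ε : ℤ) (hε : ε = 1 ∨ ε = -1) :
    Int.gcd (2 ^ (f - t) - 1) (2 ^ f + ε * 2 ^ (n + 1) + 1) = 1 := by
  set d := Int.gcd (2 ^ (f - t) - 1) (2 ^ f + ε * 2 ^ (n + 1) + 1)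
  have hu : Odd (t * (2 * m + 1)) := (Odd.of_dvd_nat ⟨n, hf⟩ hdvd).mul (odd_two_mul_add_one m)
  have hft : f - t = 2 * (t * (2 * m + 1)) := by rw [hm, mul_assoc]
  have hft_ne : f - t ≠ 0 := by rw [hft]; exact mul_ne_zero two_ne_zero hu.pos.ne'
  have hdA : d ∣ 2 ^ (f - t) - 1 := Int.natCast_dvd_natCast.mp <| by
    push_cast [Nat.one_le_two_pow]
    exact Int.gcd_dvd_left _ _
  have hdB : d ∣ 2 ^ (2 * f) + 1 := Int.natCast_dvd_natCast.mp <| by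
    push_cast
    refine (Int.gcd_dvd_right _ _).trans ?_
    subst hf
    exact two_pow_add_mul_two_pow_add_one_dvd (sq_eq_one_iff.mpr hε) n
  have hd2 : d ∣ 2 := Nat.dvd_two_of_dvd_pow_sub_one_of_dvd_pow_add_one two_pos
    (hft ▸ Nat.gcd_two_mul_two_mul_dvd hu f) hdA hdB
  have hA_odd : Odd (2 ^ (f - t) - 1) :=
    Nat.Even.sub_odd Nat.one_le_two_pow ((Nat.even_pow' hft_ne).mpr even_two) odd_one
  exact ((Nat.coprime_two_left.mpr hA_odd).coprime_dvd_left hd2).eq_one_of_dvd hdA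

theorem gcd_sub_one_case_2t (n f t m : ℕ) (hn : 1 ≤ n) (hf : f = 2 * n + 1)
    (htpos : 0 < t) (hdvd : t ∣ f) (hm : f - t = 2 * t * (2 * m + 1))
    (ε : ℤ) (hε : ε = 1 ∨ ε = -1) :
    Int.gcd (2 ^ (f - t) - 1) (2 ^ f + ε * 2 ^ (n + 1) + 1) = 1 :=
  gcd_sub_one_case_2t_general n f t m hf hdvd hm ε hε
end

section
/- Let f be an odd positive integer, t a positive divisor of f with f − t = 2t(2m+1) for a nonnegative integer m, and set n = (f−1)/2. Then for each ε ∈ {1, −1}, gcd(2^(f−t) + 1, 2^f + ε·2^(n+1) + 1) = 2^t + ε·(−1)^(m+1)·2^((t+1)/2) + 1. -/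
/-!
Write `x = 2^t` and `y = 2^((t+1)/2)`, so that `y² = 2x`, `2^(f-t) = (x²)^(2m+1)`,
`2^f = x^(4m+3)` and `2^(n+1) = x^(2m+1) y`. Put `δ = ε (-1)^(m+1)`. Since `y² = 2x`, the factors
`x ± δy + 1` multiply to `x² + 1`, and modulo `x² + 1` the second argument `b` of the gcd is
congruent to `-x (x + δy + 1)`. Hence `L = x + δy + 1` divides both arguments. Conversely, the same
factorisation applied to `X = x^(4m+3)`, `Y = x^(2m+1) y` shows that `b` divides `(x²)^(4m+3) + 1`,
so the gcd divides `x² + 1`, hence `x L`, hence `L`, as it divides `(x²)^(2m+1) + 1`, which is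
prime to `x`.
-/

section CommRing

variable {R : Type*} [CommRing R]

theorem add_mul_add_one_mul_sub_mul_add_one {x y δ : R} (hy : y ^ 2 = 2 * x) (hδ : δ ^ 2 = 1) :
    (x + δ * y + 1) * (x - δ * y + 1) = x ^ 2 + 1 := by
  linear_combination (-y ^ 2) * hδ - hy

theorem dvd_add_one_of_dvd_pow_add_one {d z : R} {k : ℕ} (h₁ : d ∣ z ^ k + 1)
    (h₂ : d ∣ z ^ (2 * k + 1) + 1) : d ∣ z + 1 := by
  have : z + 1 = (z ^ (2 * k + 1) + 1) - (z ^ k + 1) * (z * (z ^ k - 1)) := by ring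
  rw [this]
  exact h₂.sub (h₁.mul_right _)

theorem sq_add_one_dvd_sq_pow_add_one (x : R) (m : ℕ) :
    x ^ 2 + 1 ∣ (x ^ 2) ^ (2 * m + 1) + 1 := by
  simpa only [one_pow] using Odd.add_dvd_pow_add_pow (x ^ 2) 1 (odd_two_mul_add_one m)

theorem sq_add_one_dvd_pow_add_add_mul (x y ε : R) (m : ℕ) :
    x ^ 2 + 1 ∣ x ^ (4 * m + 3) + ε * (x ^ (2 * m + 1) * y) + 1 +
      x * (x + ε * (-1) ^ (m + 1) * y + 1) := by
  have h₁ : x ^ 2 + 1 ∣ x ^ (4 * m + 3) + x :=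
    (sq_add_one_dvd_sq_pow_add_one x m).trans ⟨x, by ring⟩
  have h₂ : x ^ 2 + 1 ∣ x ^ (2 * m + 1) - (-1) ^ m * x := by
    have := sub_dvd_pow_sub_pow (x ^ 2) (-1) m
    rw [sub_neg_eq_add] at this
    exact this.trans ⟨x, by ring⟩
  have : x ^ (4 * m + 3) + ε * (x ^ (2 * m + 1) * y) + 1 + x * (x + ε * (-1) ^ (m + 1) * y + 1) =
      (x ^ (4 * m + 3) + x) + ε * y * (x ^ (2 * m + 1) - (-1) ^ m * x) + (x ^ 2 + 1) := by ring
  rw [this]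
  exact (h₁.add (h₂.mul_left _)).add dvd_rfl

end CommRing

theorem Int.gcd_sq_pow_add_one_pow_add_mul_add_one {x y ε : ℤ} (m : ℕ) (hy : y ^ 2 = 2 * x)
    (hε : ε ^ 2 = 1) :
    (Int.gcd ((x ^ 2) ^ (2 * m + 1) + 1) (x ^ (4 * m + 3) + ε * (x ^ (2 * m + 1) * y) + 1) : ℤ) =
      x + ε * (-1) ^ (m + 1) * y + 1 := by
  set a := (x ^ 2) ^ (2 * m + 1) + 1
  set b := x ^ (4 * m + 3) + ε * (x ^ (2 * m + 1) * y) + 1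
  set L := x + ε * (-1) ^ (m + 1) * y + 1
  have hδ : (ε * (-1) ^ (m + 1)) ^ 2 = 1 := by
    rw [mul_pow, hε, ← pow_mul, pow_mul', neg_one_sq, one_pow, one_mul]
  have hLM := add_mul_add_one_mul_sub_mul_add_one hy hδ
  have hkey := sq_add_one_dvd_pow_add_add_mul x y ε m
  have hLb : L ∣ b := (dvd_add_left (dvd_mul_left L x)).mp ((Dvd.intro _ hLM).trans hkey)
  have hLa : L ∣ a := (Dvd.intro _ hLM).trans (sq_add_one_dvd_sq_pow_add_one x m)
  have hDa : (Int.gcd a b : ℤ) ∣ a := Int.gcd_dvd_left a b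
  have hDb : (Int.gcd a b : ℤ) ∣ b := Int.gcd_dvd_right a b
  have hb : b ∣ (x ^ 2) ^ (2 * (2 * m + 1) + 1) + 1 := by
    have hY : (x ^ (2 * m + 1) * y) ^ 2 = 2 * x ^ (4 * m + 3) := by
      rw [mul_pow, hy]; ring
    refine Dvd.intro _ ((add_mul_add_one_mul_sub_mul_add_one hY hε).trans ?_)
    ring
  have hDx : (Int.gcd a b : ℤ) ∣ x ^ 2 + 1 := dvd_add_one_of_dvd_pow_add_one hDa (hDb.trans hb)
  have hxa : IsCoprime x a := ⟨-x ^ (4 * m + 1), 1, by ring⟩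
  have hDL : (Int.gcd a b : ℤ) ∣ L :=
    (hxa.of_isCoprime_of_dvd_right hDa).symm.dvd_of_dvd_mul_left
      ((dvd_add_right hDb).mp (hDx.trans hkey))
  have hL : 0 ≤ L := by
    have hx : 0 ≤ x := by nlinarith [sq_nonneg y]
    nlinarith
  exact Int.dvd_antisymm (Int.natCast_nonneg _) hL hDL (Int.dvd_coe_gcd hLa hLb)

theorem gcd_add_one_case_2t_general (n f t m : ℕ) (hf : f = 2 * n + 1)
    (hm : f - t = 2 * t * (2 * m + 1))
    (ε : ℤ) (hε : ε = 1 ∨ ε = -1) :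
    (Int.gcd (2 ^ (f - t) + 1) (2 ^ f + ε * 2 ^ (n + 1) + 1) : ℤ) =
      2 ^ t + ε * (-1) ^ (m + 1) * 2 ^ ((t + 1) / 2) + 1 := by
  have htf : t ≤ f := by
    by_contra h
    have : 0 < 2 * t * (2 * m + 1) := Nat.mul_pos (by omega) (by omega)
    omega
  have hft : f = t * (4 * m + 3) := by
    rw [← Nat.sub_add_cancel htf, hm]; ring
  have ht : t + 1 = 2 * ((t + 1) / 2) := by
    have : Odd t := (Nat.odd_mul.mp (hft ▸ ⟨n, hf⟩ : Odd (t * (4 * m + 3)))).1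
    obtain ⟨k, rfl⟩ := this
    omega
  have hn : n + 1 = t * (2 * m + 1) + (t + 1) / 2 := by linarith
  have hy : ((2 : ℤ) ^ ((t + 1) / 2)) ^ 2 = 2 * 2 ^ t := by
    rw [← pow_mul, mul_comm, ← ht, pow_succ']
  have hε2 : ε ^ 2 = 1 := by rcases hε with rfl | rfl <;> norm_num
  rw [hm, hft, hn, pow_add, show 2 * t * (2 * m + 1) = t * 2 * (2 * m + 1) by ring, pow_mul,
    pow_mul, pow_mul, pow_mul]
  exact Int.gcd_sq_pow_add_one_pow_add_mul_add_one m hy hε2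

theorem gcd_add_one_case_2t (n f t m : ℕ) (hn : 1 ≤ n) (hf : f = 2 * n + 1)
    (htpos : 0 < t) (hdvd : t ∣ f) (hm : f - t = 2 * t * (2 * m + 1))
    (ε : ℤ) (hε : ε = 1 ∨ ε = -1) :
    (Int.gcd (2 ^ (f - t) + 1) (2 ^ f + ε * 2 ^ (n + 1) + 1) : ℤ) =
      2 ^ t + ε * (-1) ^ (m + 1) * 2 ^ ((t + 1) / 2) + 1 :=
  gcd_add_one_case_2t_general n f t m hf hm ε hε
end

section
/- Let f be an odd positive integer and d a positive odd integer dividing both 2^(f−t) + 1 and 2^(2f) + 1, where t | f and f − t is a multiple of 4t. Then d = 1. -/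
theorem common_divisor_eq_one_case_4tm (f t d : ℕ) (hf : Odd f) (hfpos : 0 < f)
    (htpos : 0 < t) (hdvd : t ∣ f) (h4t : 4 * t ∣ f - t)
    (hdpos : 0 < d) (hdodd : Odd d)
    (hd1 : d ∣ 2 ^ (f - t) + 1) (hd2 : d ∣ 2 ^ (2 * f) + 1) :
    d = 1 := by
  obtain ⟨k, hk⟩ := h4t
  have htf : t ≤ f := Nat.le_of_dvd hfpos hdvd
  set x : ZMod d := 2 with hx
  have h1 : x ^ (f - t) = -1 := by
    have h : ((2 ^ (f - t) + 1 : ℕ) : ZMod d) = 0 :=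
      (ZMod.natCast_eq_zero_iff _ _).mpr hd1
    push_cast at h
    linear_combination h
  have h2 : x ^ (2 * f) = -1 := by
    have h : ((2 ^ (2 * f) + 1 : ℕ) : ZMod d) = 0 :=
      (ZMod.natCast_eq_zero_iff _ _).mpr hd2
    push_cast at h
    linear_combination h
  have ho1 : x ^ (2 * (f - t)) = 1 := by
    rw [mul_comm, pow_mul, h1]; ring
  have ho2 : x ^ (4 * f) = 1 := by
    have he : 4 * f = (2 * f) * 2 := by ring
    rw [he, pow_mul, h2]; ring
  have hm1 : orderOf x ∣ 2 * (f - t) := orderOf_dvd_of_pow_eq_one ho1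
  have hm2 : orderOf x ∣ 4 * f := orderOf_dvd_of_pow_eq_one ho2
  have hm8t : orderOf x ∣ 8 * t := by
    have ha : orderOf x ∣ 8 * f := hm2.trans ⟨2, by ring⟩
    have hb : orderOf x ∣ 8 * (f - t) := hm1.trans ⟨4, by ring⟩
    have he : 8 * t = 8 * f - 8 * (f - t) := by omega
    rw [he]
    exact Nat.dvd_sub ha hb
  have hm4t : orderOf x ∣ 4 * t := by
    have hg : Nat.gcd (8 * t) (4 * f) = 4 * t := by
      have hfe : f = t + 4 * t * k := by omega
      have hf4 : 4 * f = 4 * t * (4 * k + 1) := by rw [hfe]; ring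
      have h8 : 8 * t = 4 * t * 2 := by ring
      rw [hf4, h8, Nat.gcd_mul_left]
      have hmod : (4 * k + 1) % 2 = 1 := by omega
      rw [Nat.gcd_rec, hmod, Nat.gcd_one_left, mul_one]
    have := Nat.dvd_gcd hm8t hm2
    rwa [hg] at this
  have h4 : x ^ (4 * t) = 1 := orderOf_dvd_iff_pow_eq_one.mp hm4t
  have hft : x ^ (f - t) = 1 := by
    rw [hk, pow_mul, h4, one_pow]
  have hcontr : (1 : ZMod d) = -1 := by rw [← h1, hft]
  have hd2' : d ∣ 2 := by
    have : ((2 : ℕ) : ZMod d) = 0 := by push_cast; linear_combination hcontr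
    exact (ZMod.natCast_eq_zero_iff _ _).mp this
  obtain ⟨m, hm⟩ := hdodd
  have hle : d ≤ 2 := Nat.le_of_dvd (by norm_num) hd2'
  interval_cases d <;> omega
end

section
/- Let f be an odd positive integer, t | f, and suppose f − t = 2t(2m+1) for a nonnegative integer m. If d is a common divisor of 2^(f−t) − 1 and 2^(2f) + 1, then d = 1. -/
theorem common_divisor_eq_one_case_2t (f t m d : ℕ) (hf : Odd f) (hfpos : 0 < f)
    (htpos : 0 < t) (hdvd : t ∣ f) (hm : f - t = 2 * t * (2 * m + 1))
    (hd1 : d ∣ 2 ^ (f - t) - 1) (hd2 : d ∣ 2 ^ (2 * f) + 1) :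
    d = 1 := by
  obtain ⟨s, hs⟩ := hdvd
  -- f - t is positive
  have hft : 0 < f - t := by
    rw [hm]; positivity
  -- gcd (f - t) (4 * f) divides 2 * f
  have hkey : Nat.gcd (f - t) (4 * f) ∣ 2 * f := by
    have h4f : 4 * f = 2 * t * (2 * s) := by rw [hs]; ring
    rw [hm, h4f, Nat.gcd_mul_left]
    have hodd : Nat.Coprime (Nat.gcd (2 * m + 1) (2 * s)) 2 := by
      exact Nat.Coprime.coprime_dvd_left (Nat.gcd_dvd_left _ _)
        (Nat.coprime_comm.mp (Nat.prime_two.coprime_iff_not_dvd.mpr (by omega)))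
    have hds : Nat.gcd (2 * m + 1) (2 * s) ∣ s :=
      (Nat.Coprime.dvd_of_dvd_mul_left hodd (Nat.gcd_dvd_right _ _))
    calc 2 * t * Nat.gcd (2 * m + 1) (2 * s) ∣ 2 * t * s :=
          Nat.mul_dvd_mul_left _ hds
      _ = 2 * f := by rw [hs]; ring
  -- work in ZMod d
  have h1le : (1:ℕ) ≤ 2 ^ (f - t) := Nat.one_le_two_pow
  have hz1 : (2 : ZMod d) ^ (f - t) = 1 := by
    have : ((2 ^ (f - t) - 1 : ℕ) : ZMod d) = 0 :=
      (ZMod.natCast_eq_zero_iff _ _).mpr hd1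
    rw [Nat.cast_sub h1le] at this
    push_cast at this
    linear_combination this
  have hz2 : (2 : ZMod d) ^ (2 * f) = -1 := by
    have : ((2 ^ (2 * f) + 1 : ℕ) : ZMod d) = 0 :=
      (ZMod.natCast_eq_zero_iff _ _).mpr hd2
    push_cast at this
    linear_combination this
  have ho1 : orderOf (2 : ZMod d) ∣ f - t := orderOf_dvd_of_pow_eq_one hz1
  have ho2 : orderOf (2 : ZMod d) ∣ 4 * f := by
    apply orderOf_dvd_of_pow_eq_one
    have : (4 : ℕ) * f = 2 * f * 2 := by ring
    rw [this, pow_mul, hz2]; ring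
  have ho : orderOf (2 : ZMod d) ∣ 2 * f := (Nat.dvd_gcd ho1 ho2).trans hkey
  have hz3 : (2 : ZMod d) ^ (2 * f) = 1 := orderOf_dvd_iff_pow_eq_one.mp ho
  have h2 : ((2 : ℕ) : ZMod d) = 0 := by
    have h11 : (1 : ZMod d) = -1 := hz3.symm.trans hz2
    push_cast
    linear_combination h11
  have hd2' : d ∣ 2 := (ZMod.natCast_eq_zero_iff _ _).mp h2
  -- d is odd since it divides the odd number 2^(f-t) - 1
  have hodd : Odd (2 ^ (f - t) - 1) :=
    Nat.Even.sub_odd h1le (Nat.even_pow.mpr ⟨even_two, hft.ne'⟩) odd_one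
  have hdodd : Odd d := hodd.of_dvd_nat hd1
  rcases (Nat.dvd_prime Nat.prime_two).mp hd2' with h | h
  · exact h
  · obtain ⟨k, hk⟩ := hdodd; omega
end

section
/- Let n ≥ 1, q² = 2^(2n+1), and t a positive divisor of 2n+1. The number of classes {k, −k} in (ℤ/(q²−1)ℤ ∖ {0})/± fixed by multiplication by 2^t, plus the number of classes {k, −k} in (ℤ/(q²+1)ℤ with (q²+1)/3 ∤ k)/± fixed by multiplication by 2^t, equals 2^t − 2. -/
/-- The unordered pair `{k, -k}` in `ℤ/Nℤ`. -/
def negClass (N : ℕ) (k : ℕ) : Finset (ZMod N) := {(k : ZMod N), -(k : ZMod N)}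

/-- Multiplication by `2^t` on a subset of `ℤ/Nℤ`. -/
def mulPow (N t : ℕ) (c : Finset (ZMod N)) : Finset (ZMod N) :=
  c.image (fun x => (2 : ZMod N) ^ t * x)

lemma pair_neg_eq_iff {N : ℕ} (a b : ZMod N) :
    ({a, -a} : Finset (ZMod N)) = {b, -b} ↔ a = b ∨ a = -b := by
  constructor
  · intro h
    have : a ∈ ({b, -b} : Finset (ZMod N)) := h ▸ Finset.mem_insert_self a {-a}
    simpa using this
  · rintro (rfl | rfl)
    · rfl
    · rw [neg_neg, Finset.pair_comm]

lemma fixed_iff (N t k : ℕ) :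
    mulPow N t (negClass N k) = negClass N k ↔
      (N ∣ (2 ^ t - 1) * k ∨ N ∣ (2 ^ t + 1) * k) := by
  have hc : (2 : ZMod N) ^ t * (k : ZMod N) = ((2 ^ t * k : ℕ) : ZMod N) := by
    push_cast; ring
  have h1 : mulPow N t (negClass N k)
      = {((2 ^ t * k : ℕ) : ZMod N), -(((2 ^ t * k : ℕ)) : ZMod N)} := by
    rw [mulPow, negClass, Finset.image_insert, Finset.image_singleton, mul_neg, hc]
  have hk2 : k ≤ 2 ^ t * k := Nat.le_mul_of_pos_left k (by positivity)
  have e1 : (((2 ^ t * k : ℕ) : ZMod N) = (k : ZMod N)) ↔ N ∣ (2 ^ t - 1) * k := by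
    rw [ZMod.natCast_eq_natCast_iff]
    constructor
    · intro h
      have := (Nat.modEq_iff_dvd' hk2).mp h.symm
      rwa [Nat.sub_mul, one_mul]
    · intro h
      rw [Nat.sub_mul, one_mul] at h
      exact ((Nat.modEq_iff_dvd' hk2).mpr h).symm
  have e2 : (((2 ^ t * k : ℕ) : ZMod N) = -(k : ZMod N)) ↔ N ∣ (2 ^ t + 1) * k := by
    rw [eq_neg_iff_add_eq_zero, ← Nat.cast_add, ZMod.natCast_eq_zero_iff,
      add_mul, one_mul]
  rw [h1, negClass, pair_neg_eq_iff, e1, e2]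

lemma filter_dvd_range (c m : ℕ) (hm : 0 < m) :
    (Finset.range (c * m)).filter (fun k => m ∣ k) = (Finset.range c).image (· * m) := by
  ext k
  simp only [Finset.mem_filter, Finset.mem_range, Finset.mem_image]
  constructor
  · rintro ⟨hk, j, rfl⟩
    refine ⟨j, ?_, mul_comm j m⟩
    rw [mul_comm c m] at hk
    exact Nat.lt_of_mul_lt_mul_left hk
  · rintro ⟨j, hj, rfl⟩
    exact ⟨(Nat.mul_lt_mul_right hm).mpr hj, ⟨j, mul_comm j m⟩⟩

lemma card_multiples (c m : ℕ) (hm : 0 < m) :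
    ((Finset.range (c * m)).filter (fun k => m ∣ k)).card = c := by
  rw [filter_dvd_range c m hm,
    Finset.card_image_of_injective _ (fun a b h => Nat.eq_of_mul_eq_mul_right hm h),
    Finset.card_range]

lemma image_negClass_card (N : ℕ) (hN : Odd N) (T : Finset ℕ) (hT : T ⊆ Finset.range N)
    (h0 : 0 ∉ T) (hsym : ∀ k ∈ T, N - k ∈ T) :
    (T.image (negClass N)).card * 2 = T.card := by
  have hodd := Nat.odd_iff.mp hN
  have key : ∀ b ∈ T.image (negClass N),
      (T.filter (fun a => negClass N a = b)).card = 2 := by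
    intro b hb
    obtain ⟨k, hkT, rfl⟩ := Finset.mem_image.mp hb
    have hkN : k < N := Finset.mem_range.mp (hT hkT)
    have hk0 : k ≠ 0 := fun h => h0 (h ▸ hkT)
    have hset : T.filter (fun a => negClass N a = negClass N k) = {k, N - k} := by
      ext a
      simp only [Finset.mem_filter, Finset.mem_insert, Finset.mem_singleton]
      constructor
      · rintro ⟨haT, ha⟩
        have haN : a < N := Finset.mem_range.mp (hT haT)
        have ha0 : a ≠ 0 := fun h => h0 (h ▸ haT)
        unfold negClass at ha
        rcases (pair_neg_eq_iff _ _).mp ha with h | h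
        · left
          have h2 := (ZMod.natCast_eq_natCast_iff a k N).mp h
          unfold Nat.ModEq at h2
          rwa [Nat.mod_eq_of_lt haN, Nat.mod_eq_of_lt hkN] at h2
        · right
          have hz : (((a + k : ℕ)) : ZMod N) = 0 := by push_cast [h]; ring
          have hdvd := (ZMod.natCast_eq_zero_iff _ _).mp hz
          have hle : N ≤ a + k := Nat.le_of_dvd (by omega) hdvd
          have h3 : N ∣ (a + k - N) := Nat.dvd_sub hdvd dvd_rfl
          have h4 : a + k - N = 0 := Nat.eq_zero_of_dvd_of_lt h3 (by omega)
          omega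
      · rintro (rfl | rfl)
        · exact ⟨hkT, rfl⟩
        · refine ⟨hsym k hkT, ?_⟩
          unfold negClass
          apply (pair_neg_eq_iff _ _).mpr
          right
          rw [eq_neg_iff_add_eq_zero, ← Nat.cast_add]
          have h5 : N - k + k = N := by omega
          rw [h5, ZMod.natCast_self]
    rw [hset, Finset.card_insert_of_notMem (by simp; omega), Finset.card_singleton]
  have hs := Finset.card_eq_sum_card_image (negClass N) T
  rw [Finset.sum_congr rfl key, Finset.sum_const, smul_eq_mul] at hs
  omega

lemma count_aux (N t u w m : ℕ) (hm : 0 < m) (hNodd : Odd N)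
    (hN : N = w * u * m)
    (hcond : ∀ k, (N ∣ (2 ^ t - 1) * k ∨ N ∣ (2 ^ t + 1) * k) ↔ m ∣ k) :
    ((((Finset.range N).filter (fun k => ¬ u * m ∣ k)).image (negClass N)).filter
        (fun c => mulPow N t c = c)).card * 2 = w * u - w := by
  have hNpos : 0 < N := hNodd.pos
  have hwum : w * u * m ≠ 0 := by rw [← hN]; exact hNpos.ne'
  have hw : 0 < w := Nat.pos_of_ne_zero (by intro h; apply hwum; rw [h]; ring)
  have hu : 0 < u := Nat.pos_of_ne_zero (by intro h; apply hwum; rw [h]; ring)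
  rw [Finset.filter_image]
  have hT : ((Finset.range N).filter (fun k => ¬ u * m ∣ k)).filter
        (fun a => mulPow N t (negClass N a) = negClass N a)
      = (Finset.range N).filter (fun k => m ∣ k ∧ ¬ u * m ∣ k) := by
    ext k
    simp only [Finset.mem_filter, Finset.mem_range]
    constructor
    · rintro ⟨⟨h1, h2⟩, h3⟩
      exact ⟨h1, (hcond k).mp ((fixed_iff N t k).mp h3), h2⟩
    · rintro ⟨h1, h2, h3⟩
      exact ⟨⟨h1, h3⟩, (fixed_iff N t k).mpr ((hcond k).mpr h2)⟩
  rw [hT]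
  have hmN : m ∣ N := by rw [hN]; exact dvd_mul_left m (w * u)
  have humN : u * m ∣ N := by rw [hN, mul_assoc]; exact dvd_mul_left (u * m) w
  have h0 : 0 ∉ (Finset.range N).filter (fun k => m ∣ k ∧ ¬ u * m ∣ k) := by
    simp [Finset.mem_filter]
  have hsym : ∀ k ∈ (Finset.range N).filter (fun k => m ∣ k ∧ ¬ u * m ∣ k),
      N - k ∈ (Finset.range N).filter (fun k => m ∣ k ∧ ¬ u * m ∣ k) := by
    intro k hk
    simp only [Finset.mem_filter, Finset.mem_range] at hk ⊢
    obtain ⟨hkN, hmk, hnk⟩ := hk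
    have hk0 : k ≠ 0 := by rintro rfl; exact hnk (dvd_zero _)
    refine ⟨by omega, Nat.dvd_sub hmN hmk, ?_⟩
    intro hd
    apply hnk
    have := Nat.dvd_sub humN hd
    rwa [Nat.sub_sub_self (le_of_lt hkN)] at this
  have himg := image_negClass_card N hNodd _ (Finset.filter_subset _ _) h0 hsym
  rw [himg]
  have hsplit : (Finset.range N).filter (fun k => m ∣ k ∧ ¬ u * m ∣ k)
      = (Finset.range N).filter (fun k => m ∣ k) \
        (Finset.range N).filter (fun k => u * m ∣ k) := by
    ext k
    simp only [Finset.mem_filter, Finset.mem_sdiff]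
    tauto
  rw [hsplit, Finset.card_sdiff_of_subset (by
    intro k hk
    simp only [Finset.mem_filter] at hk ⊢
    exact ⟨hk.1, dvd_trans (dvd_mul_left m u) hk.2⟩)]
  have c1 : ((Finset.range N).filter (fun k => m ∣ k)).card = w * u := by
    rw [hN]; exact card_multiples (w * u) m hm
  have c2 : ((Finset.range N).filter (fun k => u * m ∣ k)).card = w := by
    rw [show N = w * (u * m) by rw [hN, mul_assoc]]
    exact card_multiples w (u * m) (Nat.mul_pos hu hm)
  rw [c1, c2]

theorem count_classes_GI27_GI33 (n t : ℕ) (hn : 1 ≤ n) (htpos : 0 < t)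
    (hdvd : t ∣ 2 * n + 1) :
    -- classes {k, -k}, k ∈ ℤ/(q²-1)ℤ, k ≠ 0, fixed by multiplication by 2^t
    (((((Finset.range (2 ^ (2 * n + 1) - 1)).filter (fun k => k ≠ 0)).image
          (negClass (2 ^ (2 * n + 1) - 1))).filter
        (fun c => mulPow (2 ^ (2 * n + 1) - 1) t c = c)).card) +
    -- classes {k, -k}, k ∈ ℤ/(q²+1)ℤ, (q²+1)/3 ∤ k, fixed by multiplication by 2^t
    (((((Finset.range (2 ^ (2 * n + 1) + 1)).filter
            (fun k => ¬ ((2 ^ (2 * n + 1) + 1) / 3) ∣ k)).image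
          (negClass (2 ^ (2 * n + 1) + 1))).filter
        (fun c => mulPow (2 ^ (2 * n + 1) + 1) t c = c)).card) = 2 ^ t - 2 := by
  obtain ⟨s, hs⟩ := hdvd
  set M := 2 ^ (2 * n + 1) - 1 with hMdef
  set P := 2 ^ (2 * n + 1) + 1 with hPdef
  have hQ2 : 2 ≤ 2 ^ (2 * n + 1) := by
    calc 2 = 2 ^ 1 := rfl
    _ ≤ 2 ^ (2 * n + 1) := Nat.pow_le_pow_right (by norm_num) (by omega)
  have h2t : 2 ≤ 2 ^ t := by
    calc 2 = 2 ^ 1 := rfl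
    _ ≤ 2 ^ t := Nat.pow_le_pow_right (by norm_num) htpos
  have h2dvd : 2 ∣ 2 ^ (2 * n + 1) := dvd_pow_self 2 (by omega)
  have h2dvdt : 2 ∣ 2 ^ t := dvd_pow_self 2 htpos.ne'
  have htodd : Odd t := by
    rw [Nat.odd_iff]
    by_contra h
    have h2 : 2 ∣ t := by omega
    have : 2 ∣ 2 * n + 1 := h2.trans ⟨s, hs⟩
    omega
  have hsodd : Odd s := by
    rw [Nat.odd_iff]
    by_contra h
    have h2 : 2 ∣ s := by omega
    have : 2 ∣ 2 * n + 1 := by rw [hs]; exact Dvd.dvd.mul_left h2 t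
    omega
  have hdM : 2 ^ t - 1 ∣ M := by
    rw [hMdef, hs, pow_mul]
    simpa using Nat.sub_dvd_pow_sub_pow (2 ^ t) 1 s
  have heP : 2 ^ t + 1 ∣ P := by
    rw [hPdef, hs, pow_mul]
    simpa using Odd.nat_add_dvd_pow_add_pow (2 ^ t) 1 hsodd
  have h3e : 3 ∣ 2 ^ t + 1 := by
    simpa using Odd.nat_add_dvd_pow_add_pow 2 1 htodd
  have h3P : 3 ∣ P := by
    rw [hPdef]
    simpa using Odd.nat_add_dvd_pow_add_pow 2 1
      (show Odd (2 * n + 1) by rw [Nat.odd_iff]; omega)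
  have hPM : P - M = 2 := by rw [hMdef, hPdef]; omega
  have coprime1 : Nat.Coprime (2 ^ t + 1) M := by
    have hg1 : Nat.gcd (2 ^ t + 1) M ∣ 2 := by
      have hgP : Nat.gcd (2 ^ t + 1) M ∣ P := (Nat.gcd_dvd_left _ _).trans heP
      have hgM : Nat.gcd (2 ^ t + 1) M ∣ M := Nat.gcd_dvd_right _ _
      have := Nat.dvd_sub hgP hgM
      rwa [hPM] at this
    have hge : Nat.gcd (2 ^ t + 1) M ∣ 2 ^ t + 1 := Nat.gcd_dvd_left _ _
    rcases (Nat.dvd_prime Nat.prime_two).mp hg1 with h | h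
    · exact h
    · exfalso; rw [h] at hge; omega
  have coprime2 : Nat.Coprime (2 ^ t - 1) P := by
    have hg1 : Nat.gcd (2 ^ t - 1) P ∣ 2 := by
      have hgM : Nat.gcd (2 ^ t - 1) P ∣ M := (Nat.gcd_dvd_left _ _).trans hdM
      have hgP : Nat.gcd (2 ^ t - 1) P ∣ P := Nat.gcd_dvd_right _ _
      have := Nat.dvd_sub hgP hgM
      rwa [hPM] at this
    have hge : Nat.gcd (2 ^ t - 1) P ∣ 2 ^ t - 1 := Nat.gcd_dvd_left _ _
    rcases (Nat.dvd_prime Nat.prime_two).mp hg1 with h | h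
    · exact h
    · exfalso; rw [h] at hge; omega
  have hModd : Odd M := by rw [Nat.odd_iff, hMdef]; omega
  have hPodd : Odd P := by rw [Nat.odd_iff, hPdef]; omega
  have hMpos : 0 < M := hModd.pos
  have hPpos : 0 < P := hPodd.pos
  have hmpos : 0 < M / (2 ^ t - 1) := Nat.div_pos (Nat.le_of_dvd hMpos hdM) (by omega)
  have hppos : 0 < P / (2 ^ t + 1) := Nat.div_pos (Nat.le_of_dvd hPpos heP) (by omega)
  have hMfac : M = 1 * (2 ^ t - 1) * (M / (2 ^ t - 1)) := by
    rw [one_mul, Nat.mul_div_cancel' hdM]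
  have hPfac : P = 3 * ((2 ^ t + 1) / 3) * (P / (2 ^ t + 1)) := by
    rw [Nat.mul_div_cancel' h3e, Nat.mul_div_cancel' heP]
  have hP3 : P / 3 = ((2 ^ t + 1) / 3) * (P / (2 ^ t + 1)) := by
    obtain ⟨p, hp⟩ := heP
    obtain ⟨e3, he3⟩ := h3e
    have he3pos : 0 < e3 := by omega
    rw [hp, he3, Nat.mul_div_cancel_left _ (show 0 < 3 * e3 by omega), mul_assoc,
      Nat.mul_div_cancel_left _ (show 0 < 3 by norm_num),
      Nat.mul_div_cancel_left _ (show 0 < 3 by norm_num)]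
  have cond1 : ∀ k, (M ∣ (2 ^ t - 1) * k ∨ M ∣ (2 ^ t + 1) * k) ↔ (M / (2 ^ t - 1)) ∣ k := by
    intro k
    have hM' : (2 ^ t - 1) * (M / (2 ^ t - 1)) = M := Nat.mul_div_cancel' hdM
    constructor
    · rintro (h | h)
      · rw [← hM'] at h
        exact (Nat.mul_dvd_mul_iff_left (show 0 < 2 ^ t - 1 by omega)).mp h
      · have hMk : M ∣ k := Nat.Coprime.dvd_of_dvd_mul_left coprime1.symm h
        exact dvd_trans (Nat.div_dvd_of_dvd hdM) hMk
    · intro h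
      left
      rw [← hM']
      exact mul_dvd_mul_left _ h
  have cond2 : ∀ k, (P ∣ (2 ^ t - 1) * k ∨ P ∣ (2 ^ t + 1) * k) ↔ (P / (2 ^ t + 1)) ∣ k := by
    intro k
    have hP' : (2 ^ t + 1) * (P / (2 ^ t + 1)) = P := Nat.mul_div_cancel' heP
    constructor
    · rintro (h | h)
      · have hPk : P ∣ k := Nat.Coprime.dvd_of_dvd_mul_left coprime2.symm h
        exact dvd_trans (Nat.div_dvd_of_dvd heP) hPk
      · rw [← hP'] at h
        exact (Nat.mul_dvd_mul_iff_left (show 0 < 2 ^ t + 1 by omega)).mp h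
    · intro h
      right
      rw [← hP']
      exact mul_dvd_mul_left _ h
  have hf1 : (Finset.range M).filter (fun k => k ≠ 0)
      = (Finset.range M).filter (fun k => ¬ (2 ^ t - 1) * (M / (2 ^ t - 1)) ∣ k) := by
    have hM' : (2 ^ t - 1) * (M / (2 ^ t - 1)) = M := Nat.mul_div_cancel' hdM
    ext k
    simp only [Finset.mem_filter, Finset.mem_range, hM']
    constructor
    · rintro ⟨h1, h2⟩
      exact ⟨h1, fun hd => h2 (Nat.eq_zero_of_dvd_of_lt hd h1)⟩
    · rintro ⟨h1, h2⟩
      exact ⟨h1, fun hk => h2 (by rw [hk]; exact dvd_zero M)⟩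
  have hf2 : (Finset.range P).filter (fun k => ¬ (P / 3) ∣ k)
      = (Finset.range P).filter (fun k => ¬ ((2 ^ t + 1) / 3) * (P / (2 ^ t + 1)) ∣ k) := by
    ext k
    simp only [Finset.mem_filter, hP3]
  rw [hf1, hf2]
  have h1 := count_aux M t (2 ^ t - 1) 1 (M / (2 ^ t - 1)) hmpos hModd hMfac cond1
  have h2 := count_aux P t ((2 ^ t + 1) / 3) 3 (P / (2 ^ t + 1)) hppos hPodd hPfac cond2
  have he' : 3 * ((2 ^ t + 1) / 3) = 2 ^ t + 1 := Nat.mul_div_cancel' h3e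
  rw [one_mul] at h1
  rw [he'] at h2
  omega
end

section
/- Let n ≥ 1, q² = 2^(2n+1), t a positive divisor of 2n+1, and set f = 2n+1. Suppose k ∈ ℤ/(q²−1)ℤ and l ∈ ℤ/(q²−1)ℤ satisfy 2^t·k ≡ (q/√2)(k+l) and 2^t·l ≡ (q/√2)(k−l) mod q²−1, where q/√2 = 2^n. Then (2^t − 1)k ≡ 0 mod q² − 1 and l ≡ (√2 q − 1)k ≡ (2^(n+1) − 1)k mod q² − 1. -/
theorem U2_empty_congruences (n t : ℕ) (hn : 1 ≤ n) (htpos : 0 < t)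
    (hdvd : t ∣ 2 * n + 1)
    (k l : ZMod (2 ^ (2 * n + 1) - 1))
    (h1 : (2 : ZMod (2 ^ (2 * n + 1) - 1)) ^ t * k = 2 ^ n * (k + l))
    (h2 : (2 : ZMod (2 ^ (2 * n + 1) - 1)) ^ t * l = 2 ^ n * (k - l)) :
    ((2 : ZMod (2 ^ (2 * n + 1) - 1)) ^ t - 1) * k = 0 ∧
      l = (2 ^ (n + 1) - 1) * k := by
  let N := 2 ^ (2 * n + 1) - 1
  show (2 ^ t - 1) * k = 0 ∧ l = (2 ^ (n + 1) - 1) * k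
  -- 2 ^ (2n+1) = 1 in ZMod N
  have hone : (2 : ZMod N) ^ (2 * n + 1) = 1 := by
    have h1' : (1 : ℕ) ≤ 2 ^ (2 * n + 1) := Nat.one_le_two_pow
    have : ((2 ^ (2 * n + 1) : ℕ) : ZMod N) = ((N + 1 : ℕ) : ZMod N) := by
      congr 1
      omega
    push_cast at this
    simpa [ZMod.natCast_self] using this
  -- 2^(2t) * k = k
  have hk2t : (2 : ZMod N) ^ (2 * t) * k = k := by
    linear_combination (2 : ZMod N) ^ t * h1 + 2 ^ n * h1 + 2 ^ n * h2 + k * hone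
  -- 2 is a unit
  have huval : (2 : ZMod N) * 2 ^ (2 * n) = 1 := by
    linear_combination hone
  set u : (ZMod N)ˣ := ⟨2, 2 ^ (2 * n), huval, by linear_combination hone⟩ with hu
  have huc : (u : ZMod N) = 2 := rfl
  -- stabilizer subgroup of k
  let S : Subgroup (ZMod N)ˣ :=
    { carrier := {v | (v : ZMod N) * k = k}
      one_mem' := by simp
      mul_mem' := by
        intro a b ha hb
        simp only [Set.mem_setOf_eq, Units.val_mul] at *
        rw [mul_assoc, hb, ha]
      inv_mem' := by
        intro a ha
        simp only [Set.mem_setOf_eq] at *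
        calc ((a⁻¹ : (ZMod N)ˣ) : ZMod N) * k
            = ((a⁻¹ : (ZMod N)ˣ) : ZMod N) * ((a : ZMod N) * k) := by rw [ha]
          _ = (((a⁻¹ * a : (ZMod N)ˣ)) : ZMod N) * k := by
              rw [Units.val_mul, mul_assoc]
          _ = k := by simp }
  have hS2t : u ^ (2 * t) ∈ S := by
    show ((u ^ (2 * t) : (ZMod N)ˣ) : ZMod N) * k = k
    rw [Units.val_pow_eq_pow_val, huc]
    exact hk2t
  have hSf : u ^ (2 * n + 1) ∈ S := by
    show ((u ^ (2 * n + 1) : (ZMod N)ˣ) : ZMod N) * k = k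
    rw [Units.val_pow_eq_pow_val, huc, hone, one_mul]
  -- gcd(2t, 2n+1) = t
  have hodd : Nat.Coprime 2 (2 * n + 1) := by
    rw [Nat.coprime_two_left]
    exact ⟨n, by ring⟩
  have hgcd : Nat.gcd (2 * t) (2 * n + 1) = t := by
    rw [hodd.gcd_mul_left_cancel t, Nat.gcd_eq_left hdvd]
  have hbez := Nat.gcd_eq_gcd_ab (2 * t) (2 * n + 1)
  rw [hgcd] at hbez
  have hz : u ^ (t : ℤ) =
      (u ^ (2 * t)) ^ (Nat.gcdA (2 * t) (2 * n + 1)) *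
        (u ^ (2 * n + 1)) ^ (Nat.gcdB (2 * t) (2 * n + 1)) := by
    rw [← zpow_natCast u (2 * t), ← zpow_natCast u (2 * n + 1), ← zpow_mul, ← zpow_mul,
      ← zpow_add]
    congr 1
    all_goals (push_cast at hbez ⊢; linarith)
  have hmem : u ^ (t : ℤ) ∈ S := by
    rw [hz]
    exact S.mul_mem (S.zpow_mem hS2t _) (S.zpow_mem hSf _)
  rw [zpow_natCast] at hmem
  have hkt : (2 : ZMod N) ^ t * k = k := by
    have : ((u ^ t : (ZMod N)ˣ) : ZMod N) * k = k := hmem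
    rwa [Units.val_pow_eq_pow_val, huc] at this
  constructor
  · linear_combination hkt
  · linear_combination -(2 : ZMod N) ^ (n + 1) * h1 + 2 ^ (n + 1) * hkt - (k + l) * hone
end
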